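/- Let k ∈ ℂ with Re k > 0 and Im k > 0, let α ∈ ℂ with Im α ≥ 0, and fix x₀ ∈ ℝ and y₀ ≥ 0. Define u(x, y) = (1/4π)·∫_ℝ e^{−γ(λ)(y+y₀)}·((γ(λ)+iα)/(γ(λ)−iα))·e^{iλ(x−x₀)}/γ(λ) dλ. Then at every point (x, y) with y + y₀ > 0, u possesses second partial derivatives in x and in y and satisfies ∂²u/∂x² + ∂²u/∂y² + k²·u = 0. -/

import Mathlib

open MeasureTheory

set_option maxHeartbeats 1000000
open Complex

noncomputable def Complex.abs : AbsoluteValue ℂ ℝ where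
  toFun z := ‖z‖
  map_mul' := norm_mul
  nonneg' := norm_nonneg
  eq_zero' _ := norm_eq_zero
  add_le' := norm_add_le

lemma Complex.norm_eq_abs (z : ℂ) : ‖z‖ = Complex.abs z := rfl
lemma Complex.abs_exp (z : ℂ) : Complex.abs (Complex.exp z) = Real.exp z.re := Complex.norm_exp z
lemma Complex.abs_ofReal (r : ℝ) : Complex.abs (r : ℂ) = |r| := Complex.norm_real r
lemma Complex.abs_I : Complex.abs Complex.I = 1 := Complex.norm_I
lemma Complex.abs_two : Complex.abs 2 = 2 := by
  show ‖(2:ℂ)‖ = 2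
  simp
lemma Complex.sq_abs (z : ℂ) : Complex.abs z ^ 2 = Complex.normSq z := Complex.sq_norm z
lemma Complex.re_le_abs (z : ℂ) : z.re ≤ Complex.abs z := Complex.re_le_norm z
lemma Complex.abs_im_le_abs (z : ℂ) : |z.im| ≤ Complex.abs z := Complex.abs_im_le_norm z
lemma Complex.abs_re_le_abs (z : ℂ) : |z.re| ≤ Complex.abs z := Complex.abs_re_le_norm z

lemma im_z (k : ℂ) (l : ℝ) : ((l:ℂ)^2 - k^2).im = -(2*k.re*k.im) := by
  simp [pow_two, Complex.mul_im]; ring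

lemma re_z (k : ℂ) (l : ℝ) : ((l:ℂ)^2 - k^2).re = l^2 - (k^2).re := by
  simp [pow_two, Complex.mul_re]

lemma z_ne (k : ℂ) (hk_re : 0 < k.re) (hk_im : 0 < k.im) (l : ℝ) : (l:ℂ)^2 - k^2 ≠ 0 := by
  intro h
  have h2 := im_z k l
  rw [h] at h2
  simp at h2
  rcases h2 with h2 | h2 <;> nlinarith

lemma g_sq (k : ℂ) (hk_re : 0 < k.re) (hk_im : 0 < k.im) (l : ℝ) :
    (((l:ℂ)^2 - k^2) ^ ((1:ℂ)/2))^2 = (l:ℂ)^2 - k^2 := by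
  rw [pow_two, ← Complex.cpow_add _ _ (z_ne k hk_re hk_im l)]
  norm_num

lemma g_re_pos (k : ℂ) (hk_re : 0 < k.re) (hk_im : 0 < k.im) (l : ℝ) :
    0 < ((((l:ℂ)^2 - k^2) ^ ((1:ℂ)/2)).re) := by
  rw [Complex.cpow_def_of_ne_zero (z_ne k hk_re hk_im l)]
  rw [Complex.exp_re]
  apply mul_pos (Real.exp_pos _)
  apply Real.cos_pos_of_mem_Ioo
  have h1 := Complex.neg_pi_lt_arg ((l:ℂ)^2 - k^2)
  have h2 : Complex.arg ((l:ℂ)^2 - k^2) < 0 := by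
    rw [Complex.arg_neg_iff]
    rw [im_z k l]; nlinarith
  have him : (Complex.log ((l:ℂ)^2 - k^2) * (1/2)).im = Complex.arg ((l:ℂ)^2 - k^2) / 2 := by
    simp [Complex.mul_im, Complex.log_im]
    ring
  rw [him]
  constructor
  · linarith
  · have := Real.pi_pos; linarith

lemma two_re_sq (z w : ℂ) (hsq : w^2 = z) : 2 * w.re^2 = Complex.abs z + z.re := by
  have h1 : Complex.abs z = w.re^2 + w.im^2 := by
    rw [← hsq, map_pow, Complex.sq_abs, Complex.normSq_apply]; ring
  have h2 : z.re = w.re^2 - w.im^2 := by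
    rw [← hsq, pow_two, Complex.mul_re]; ring
  linarith

/-- Master estimates: lower bounds on the real part and upper bound on abs. -/
lemma master (k : ℂ) (hk_re : 0 < k.re) (hk_im : 0 < k.im) :
    ∃ (m c₁ : ℝ), 0 < m ∧ 0 < c₁ ∧ ∀ l : ℝ,
      m ≤ ((((l:ℂ)^2 - k^2) ^ ((1:ℂ)/2)).re) ∧
      c₁ * (1 + |l|) ≤ ((((l:ℂ)^2 - k^2) ^ ((1:ℂ)/2)).re) ∧
      Complex.abs (((l:ℂ)^2 - k^2) ^ ((1:ℂ)/2)) ≤ (1 + |l|) * (1 + Complex.abs k) := by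
  set b := 2*k.re*k.im with hb
  have hbpos : 0 < b := by positivity
  set A := Complex.abs k ^ 2 with hA
  have hApos : 0 < A := by
    have : k ≠ 0 := fun h => by simp [h] at hk_re
    exact pow_pos (Complex.abs.pos this) 2
  set c₀ := min b (b^2/(4*A)) with hc₀
  have hc₀pos : 0 < c₀ := lt_min hbpos (by positivity)
  set m := Real.sqrt (c₀/2) with hm
  have hmpos : 0 < m := Real.sqrt_pos.mpr (by linarith)
  set R := max 1 (Real.sqrt (2*A)) with hR
  have hR1 : (1:ℝ) ≤ R := le_max_left _ _
  set c₁ := min (m/(1+R)) 4⁻¹ with hc₁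
  have hc₁pos : 0 < c₁ := by
    apply lt_min (by positivity) (by norm_num)
  refine ⟨m, c₁, hmpos, hc₁pos, fun l => ?_⟩
  set z := (l:ℂ)^2 - k^2 with hz
  set w := z ^ ((1:ℂ)/2) with hw
  have hsq : w^2 = z := g_sq k hk_re hk_im l
  have hrepos : 0 < w.re := g_re_pos k hk_re hk_im l
  have h2re : 2 * w.re^2 = Complex.abs z + z.re := two_re_sq z w hsq
  have hzim : z.im = -b := im_z k l
  have hzre : z.re = l^2 - (k^2).re := re_z k l
  have habsk2 : Complex.abs (k^2) = A := by rw [map_pow]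
  have hrek2 : (k^2).re ≤ A := by
    calc (k^2).re ≤ Complex.abs (k^2) := Complex.re_le_abs _
    _ = A := habsk2
  have habs_ge_b : b ≤ Complex.abs z := by
    have := Complex.abs_im_le_abs z
    rw [hzim] at this
    rw [abs_neg, abs_of_pos hbpos] at this
    exact this
  have habs_ge_re : z.re ≤ Complex.abs z := Complex.re_le_abs z
  have habs_ge_negre : -z.re ≤ Complex.abs z := by
    have := Complex.abs_re_le_abs z
    cases abs_cases z.re with
    | inl h => linarith [h.1]
    | inr h => linarith [h.1]
  have habs_le : Complex.abs z ≤ l^2 + A := by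
    have h2l : Complex.abs ((l:ℂ)^2) = l^2 := by
      rw [map_pow, Complex.abs_ofReal, _root_.sq_abs]
    calc Complex.abs z = ‖(l:ℂ)^2 - k^2‖ := by rw [hz, Complex.norm_eq_abs]
    _ ≤ ‖(l:ℂ)^2‖ + ‖k^2‖ := norm_sub_le _ _
    _ = l^2 + A := by rw [Complex.norm_eq_abs, Complex.norm_eq_abs, h2l, habsk2]
  -- key bound: c₀ ≤ abs z + z.re
  have hkey : c₀ ≤ Complex.abs z + z.re := by
    rcases le_or_gt 0 z.re with h | h
    · calc c₀ ≤ b := min_le_left _ _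
      _ ≤ Complex.abs z + z.re := by linarith
    · have hl2 : l^2 < A := by rw [hzre] at h; linarith
      have habs2A : Complex.abs z ≤ 2*A := by linarith
      have hD : 0 < Complex.abs z - z.re := by linarith
      have hD4A : Complex.abs z - z.re ≤ 4*A := by linarith
      have hprod : (Complex.abs z + z.re) * (Complex.abs z - z.re) = b^2 := by
        have hsqabs : Complex.abs z ^ 2 = z.re^2 + z.im^2 := by
          rw [Complex.sq_abs, Complex.normSq_apply]; ring
        rw [hzim] at hsqabs
        nlinarith
      have hS : 0 ≤ Complex.abs z + z.re := by linarith
      calc c₀ ≤ b^2/(4*A) := min_le_right _ _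
      _ ≤ Complex.abs z + z.re := by
          rw [div_le_iff₀ (by positivity)]
          nlinarith [mul_le_mul_of_nonneg_left hD4A hS]
  have hm_le : m ≤ w.re := by
    have h1 : c₀/2 ≤ w.re^2 := by linarith
    calc m = Real.sqrt (c₀/2) := hm
    _ ≤ Real.sqrt (w.re^2) := Real.sqrt_le_sqrt h1
    _ = w.re := Real.sqrt_sq hrepos.le
  refine ⟨hm_le, ?_, ?_⟩
  · rcases le_total |l| R with h | h
    · have h1 : c₁ ≤ m/(1+R) := min_le_left _ _
      have h2 : c₁ * (1+|l|) ≤ (m/(1+R)) * (1+R) := by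
        apply mul_le_mul h1 (by linarith) (by positivity) (by positivity)
      rw [div_mul_cancel₀ m (by positivity : (1:ℝ)+R ≠ 0)] at h2
      linarith
    · have hsq2A : 2*A ≤ R^2 := by
        have h1 : Real.sqrt (2*A) ≤ R := le_max_right _ _
        nlinarith [Real.sq_sqrt (by positivity : (0:ℝ) ≤ 2*A), Real.sqrt_nonneg (2*A)]
      have hl2 : 2*A ≤ l^2 := by
        have : R^2 ≤ |l|^2 := by nlinarith
        rw [_root_.sq_abs] at this; linarith
      have hzre2 : l^2/2 ≤ z.re := by rw [hzre]; linarith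
      have hwre : |l|/2 ≤ w.re := by
        have h1 : (|l|/2)^2 ≤ w.re^2 := by
          rw [div_pow, _root_.sq_abs]
          nlinarith
        exact (pow_le_pow_iff_left₀ (by positivity) hrepos.le two_ne_zero).mp h1
      have h1 : c₁ ≤ 4⁻¹ := min_le_right _ _
      have hlge1 : 1 ≤ |l| := le_trans hR1 h
      nlinarith
  · have habsw : Complex.abs w ^ 2 ≤ ((1+|l|) * (1+Complex.abs k))^2 := by
      have h1 : Complex.abs w ^2 = Complex.abs z := by
        rw [← hsq, map_pow]
      rw [h1, mul_pow]
      have hK : 0 ≤ Complex.abs k := Complex.abs.nonneg k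
      have habsl : 0 ≤ |l| := abs_nonneg l
      nlinarith [habs_le, _root_.sq_abs l, mul_nonneg habsl hK, sq_nonneg (|l| + Complex.abs k), mul_nonneg (mul_nonneg habsl habsl) hK, mul_nonneg (mul_nonneg habsl hK) hK]
    exact (pow_le_pow_iff_left₀ (Complex.abs.nonneg w) (by positivity) two_ne_zero).mp habsw


noncomputable def fint (γ : ℝ → ℂ) (α : ℂ) (x₀ y₀ : ℝ) (a b l : ℝ) : ℂ :=
  Complex.exp (-γ l * (b + y₀)) * ((γ l + Complex.I * α) / (γ l - Complex.I * α)) *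
    Complex.exp (Complex.I * l * (a - x₀)) / γ l

lemma fint_norm (γ : ℝ → ℂ) (α : ℂ) (x₀ y₀ a b l : ℝ) :
    ‖fint γ α x₀ y₀ a b l‖ = Real.exp (-(γ l).re * (b + y₀)) *
      Complex.abs ((γ l + Complex.I * α) / (γ l - Complex.I * α)) / Complex.abs (γ l) := by
  rw [fint, Complex.norm_eq_abs, map_div₀, map_mul, map_mul, Complex.abs_exp, Complex.abs_exp]
  have h1 : (-γ l * ((b:ℂ) + (y₀:ℂ))).re = -(γ l).re * (b + y₀) := by
    have : ((b:ℂ) + (y₀:ℂ)) = ((b + y₀ : ℝ) : ℂ) := by push_cast; ring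
    rw [this, Complex.mul_re]
    simp [Complex.neg_re, Complex.neg_im]
  have h2 : (Complex.I * (l:ℂ) * ((a:ℂ) - (x₀:ℂ))).re = 0 := by
    simp [Complex.mul_re, Complex.mul_im]
  rw [h1, h2, Real.exp_zero]
  ring

lemma fint_hasDerivAt_x (γ : ℝ → ℂ) (α : ℂ) (x₀ y₀ b l t : ℝ) :
    HasDerivAt (fun s : ℝ => fint γ α x₀ y₀ s b l)
      (Complex.I * l * fint γ α x₀ y₀ t b l) t := by
  have h1 : HasDerivAt (fun w : ℂ => Complex.I * l * (w - x₀)) (Complex.I * l) (t:ℂ) := by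
    simpa using ((hasDerivAt_id ((t:ℝ):ℂ)).sub_const (x₀:ℂ)).const_mul (Complex.I * (l:ℂ))
  have h2 := h1.cexp
  have h3 := (h2.const_mul (Complex.exp (-γ l * (b + y₀)) *
      ((γ l + Complex.I * α) / (γ l - Complex.I * α)))).div_const (γ l)
  have h4 := h3.comp_ofReal
  have h5 : (fun s : ℝ => fint γ α x₀ y₀ s b l) = fun s : ℝ =>
      Complex.exp (-γ l * (b + y₀)) * ((γ l + Complex.I * α) / (γ l - Complex.I * α)) *
        Complex.exp (Complex.I * l * ((s:ℂ) - x₀)) / γ l := by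
    funext s; rw [fint]
  rw [h5]
  convert h4 using 1
  rw [fint]; ring

lemma fint_hasDerivAt_y (γ : ℝ → ℂ) (α : ℂ) (x₀ y₀ a l t : ℝ) :
    HasDerivAt (fun s : ℝ => fint γ α x₀ y₀ a s l)
      (-γ l * fint γ α x₀ y₀ a t l) t := by
  have h1 : HasDerivAt (fun w : ℂ => -γ l * (w + y₀)) (-γ l) (t:ℂ) := by
    simpa using ((hasDerivAt_id ((t:ℝ):ℂ)).add_const (y₀:ℂ)).const_mul (-γ l)
  have h2 := h1.cexp
  have h3 := ((h2.mul_const ((γ l + Complex.I * α) / (γ l - Complex.I * α))).mul_const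
      (Complex.exp (Complex.I * l * (a - x₀)))).div_const (γ l)
  have h4 := h3.comp_ofReal
  have h5 : (fun s : ℝ => fint γ α x₀ y₀ a s l) = fun s : ℝ =>
      Complex.exp (-γ l * ((s:ℂ) + y₀)) * ((γ l + Complex.I * α) / (γ l - Complex.I * α)) *
        Complex.exp (Complex.I * l * (a - x₀)) / γ l := by
    funext s; rw [fint]
  rw [h5]
  convert h4 using 1
  · rw [fint]; ring

lemma fint_cont (γ : ℝ → ℂ) (α : ℂ) (x₀ y₀ : ℝ) (hγc : Continuous γ)
    (hne : ∀ l, γ l ≠ 0) (hαne : ∀ l, γ l - Complex.I * α ≠ 0) (a b : ℝ) :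
    Continuous (fun l => fint γ α x₀ y₀ a b l) := by
  unfold fint
  apply Continuous.div _ hγc hne
  apply Continuous.mul
  · apply Continuous.mul
    · exact Complex.continuous_exp.comp ((hγc.neg).mul continuous_const)
    · exact (hγc.add continuous_const).div (hγc.sub continuous_const) hαne
  · exact Complex.continuous_exp.comp
      ((continuous_const.mul Complex.continuous_ofReal).mul continuous_const)

lemma B_integrable (C c d : ℝ) (hc : 0 < c) (hd : 0 < d) (hC : 0 ≤ C) :
    Integrable (fun l : ℝ => C * (1 + |l|)^2 * Real.exp (-(c * (1 + |l|)) * d)) := by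
  have key : ∀ s : ℝ, 1 ≤ s → s^4 * Real.exp (-(c * s) * d) ≤ (4 / (c * d))^4 := by
    intro s hs
    have h0 : (0:ℝ) ≤ c * s * d / 4 := by positivity
    have h1 : c * s * d / 4 ≤ Real.exp (c * s * d / 4) := by
      linarith [Real.add_one_le_exp (c * s * d / 4)]
    have h2 : (c * s * d / 4)^4 ≤ Real.exp (c * s * d / 4)^4 := pow_le_pow_left₀ h0 h1 4
    have h3 : Real.exp (c * s * d / 4)^4 = Real.exp (c * s * d) := by
      rw [← Real.exp_nat_mul]; congr 1; push_cast; ring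
    have h4 : Real.exp (-(c * s) * d) = (Real.exp (c * s * d))⁻¹ := by
      rw [← Real.exp_neg]; ring_nf
    have h5 : s^4 = (4 / (c * d))^4 * (c * s * d / 4)^4 := by
      rw [← mul_pow]; congr 1; field_simp
    rw [h4]
    calc s^4 * (Real.exp (c * s * d))⁻¹
        ≤ ((4 / (c * d))^4 * Real.exp (c * s * d)) * (Real.exp (c * s * d))⁻¹ := by
          apply mul_le_mul_of_nonneg_right _ (by positivity)
          rw [h5]
          exact mul_le_mul_of_nonneg_left (h2.trans h3.le) (by positivity)
    _ = (4 / (c * d))^4 := by field_simp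
  apply Integrable.mono' ((integrable_inv_one_add_sq).const_mul (C * (4 / (c * d))^4))
  · apply Continuous.aestronglyMeasurable
    exact (continuous_const.mul ((continuous_const.add _root_.continuous_abs).pow 2)).mul
      (Real.continuous_exp.comp
        (((continuous_const.mul (continuous_const.add _root_.continuous_abs)).neg).mul continuous_const))
  · apply ae_of_all
    intro l
    have h1 : (0:ℝ) < 1 + l^2 := by positivity
    rw [Real.norm_eq_abs, _root_.abs_of_nonneg (by positivity)]
    rw [show C * (4 / (c * d))^4 * (1 + l^2)⁻¹ = C * (4 / (c * d))^4 / (1 + l^2) by ring,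
      le_div_iff₀ h1]
    have ha : (1:ℝ) ≤ 1 + |l| := by linarith [abs_nonneg l]
    have h2 : 1 + l^2 ≤ (1 + |l|)^2 := by nlinarith [abs_nonneg l, _root_.sq_abs l]
    have h3 := key (1 + |l|) ha
    calc C * (1 + |l|)^2 * Real.exp (-(c * (1 + |l|)) * d) * (1 + l^2)
        ≤ C * (1 + |l|)^2 * Real.exp (-(c * (1 + |l|)) * d) * (1 + |l|)^2 := by
          apply mul_le_mul_of_nonneg_left h2 (by positivity)
    _ = C * ((1 + |l|)^4 * Real.exp (-(c * (1 + |l|)) * d)) := by ring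
    _ ≤ C * (4 / (c * d))^4 := mul_le_mul_of_nonneg_left h3 hC

/-- For `k ∈ ℂ` with `Re k > 0`, `Im k > 0`, `α ∈ ℂ` with `Im α ≥ 0`, and fixed
`x₀ ∈ ℝ`, `y₀ ≥ 0`, the spectral representation of the scattered field
`u(x,y) = (1/4π)·∫_ℝ e^{−γ(λ)(y+y₀)}·((γ(λ)+iα)/(γ(λ)−iα))·e^{iλ(x−x₀)}/γ(λ) dλ`
possesses second partial derivatives in `x` and `y` at every point with
`y + y₀ > 0` and satisfies `∂²u/∂x² + ∂²u/∂y² + k²·u = 0` there. -/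
theorem scattered_field_satisfies_helmholtz (k α : ℂ)
    (hk_re : 0 < k.re) (hk_im : 0 < k.im) (hα : 0 ≤ α.im)
    (x₀ y₀ : ℝ) (hy₀ : 0 ≤ y₀)
    (γ : ℝ → ℂ) (hγ : ∀ l : ℝ, γ l = ((l : ℂ) ^ 2 - k ^ 2) ^ ((1 : ℂ) / 2))
    (u : ℝ → ℝ → ℂ)
    (hu : ∀ x y : ℝ, u x y = (1 / (4 * (Real.pi : ℂ))) *
      ∫ l : ℝ, Complex.exp (-γ l * (y + y₀)) *
        ((γ l + Complex.I * α) / (γ l - Complex.I * α)) *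
        Complex.exp (Complex.I * l * (x - x₀)) / γ l)
    (x y : ℝ) (hy : 0 < y + y₀) :
    ∃ ux uxx uy uyy : ℂ,
      HasDerivAt (fun t : ℝ => u t y) ux x ∧
      HasDerivAt (fun t : ℝ => deriv (fun s : ℝ => u s y) t) uxx x ∧
      HasDerivAt (fun t : ℝ => u x t) uy y ∧
      HasDerivAt (fun t : ℝ => deriv (fun s : ℝ => u x s) t) uyy y ∧
      uxx + uyy + k ^ 2 * u x y = 0 := by
  obtain ⟨m, c₁, hm, hc₁, hbnd⟩ := master k hk_re hk_im
  have hγsq : ∀ l : ℝ, γ l ^ 2 = (l:ℂ)^2 - k^2 := fun l => by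
    rw [hγ l]; exact g_sq k hk_re hk_im l
  have hγre : ∀ l : ℝ, 0 < (γ l).re := fun l => by rw [hγ l]; exact g_re_pos k hk_re hk_im l
  have hγm : ∀ l : ℝ, m ≤ (γ l).re := fun l => by rw [hγ l]; exact (hbnd l).1
  have hγc₁ : ∀ l : ℝ, c₁ * (1 + |l|) ≤ (γ l).re := fun l => by rw [hγ l]; exact (hbnd l).2.1
  have hγabs : ∀ l : ℝ, Complex.abs (γ l) ≤ (1 + |l|) * (1 + Complex.abs k) := fun l => by
    rw [hγ l]; exact (hbnd l).2.2
  have hγne : ∀ l : ℝ, γ l ≠ 0 := fun l h => by simpa [h] using hγre l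
  have hγαre : ∀ l : ℝ, (γ l - Complex.I*α).re = (γ l).re + α.im := by
    intro l; simp [Complex.sub_re, Complex.mul_re]
  have hγαne : ∀ l : ℝ, γ l - Complex.I*α ≠ 0 := by
    intro l h
    have h2 := hγαre l
    rw [h] at h2
    simp at h2
    nlinarith [hγre l]
  have hγcont : Continuous γ := by
    have hfe : γ = fun l : ℝ => ((l:ℂ)^2 - k^2) ^ ((1:ℂ)/2) := funext hγ
    rw [hfe, continuous_iff_continuousAt]
    intro l
    have h1 : ContinuousAt (fun z : ℂ => z ^ ((1:ℂ)/2)) ((l:ℂ)^2 - k^2) := by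
      apply _root_.continuousAt_cpow_const
      rw [Complex.mem_slitPlane_iff]
      right
      rw [im_z k l]
      nlinarith
    have h2 : ContinuousAt (fun l : ℝ => (l:ℂ)^2 - k^2) l :=
      ((Complex.continuous_ofReal.pow 2).sub continuous_const).continuousAt
    exact ContinuousAt.comp (g := fun z : ℂ => z ^ ((1:ℂ)/2))
      (f := fun l : ℝ => (l:ℂ)^2 - k^2) (x := l) h1 h2
  have hCR0 : (0:ℝ) ≤ 1 + 2 * Complex.abs α / m := by
    have : (0:ℝ) ≤ 2 * Complex.abs α / m := div_nonneg (mul_nonneg two_pos.le (Complex.abs.nonneg α)) hm.le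
    linarith
  have habsγm : ∀ l : ℝ, m ≤ Complex.abs (γ l) := fun l => (hγm l).trans (Complex.re_le_abs _)
  have habsd : ∀ l : ℝ, m ≤ Complex.abs (γ l - Complex.I * α) := by
    intro l
    have h1 : m ≤ (γ l - Complex.I*α).re := by rw [hγαre l]; linarith [hγm l]
    exact h1.trans (Complex.re_le_abs _)
  have hCR : ∀ l : ℝ, Complex.abs ((γ l + Complex.I*α)/(γ l - Complex.I*α)) ≤
      1 + 2*Complex.abs α/m := by
    intro l
    rw [map_div₀]
    have hd := habsd l
    have hdpos : 0 < Complex.abs (γ l - Complex.I*α) := lt_of_lt_of_le hm hd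
    rw [div_le_iff₀ hdpos]
    have hn : Complex.abs (γ l + Complex.I*α) ≤
        Complex.abs (γ l - Complex.I*α) + 2*Complex.abs α := by
      have he : γ l + Complex.I*α = (γ l - Complex.I*α) + 2*(Complex.I*α) := by ring
      rw [he]
      have h3 := Complex.abs.add_le (γ l - Complex.I*α) (2*(Complex.I*α))
      have h4 : Complex.abs (2*(Complex.I*α)) = 2 * Complex.abs α := by
        rw [map_mul, map_mul, Complex.abs_two, Complex.abs_I, one_mul]
      linarith
    have h5 : 2*Complex.abs α ≤ (2*Complex.abs α/m) * Complex.abs (γ l - Complex.I*α) := by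
      rw [div_mul_eq_mul_div, le_div_iff₀ hm]
      have := mul_le_mul_of_nonneg_left hd (mul_nonneg two_pos.le (Complex.abs.nonneg α) : (0:ℝ) ≤ 2*Complex.abs α)
      linarith
    nlinarith [hn, h5]
  have hfb : ∀ (a b d : ℝ), 0 < d → d ≤ b + y₀ → ∀ l : ℝ,
      ‖fint γ α x₀ y₀ a b l‖ ≤ ((1 + 2*Complex.abs α/m)/m) * Real.exp (-(c₁*(1+|l|))*d) := by
    intro a b d hd hdb l
    rw [fint_norm]
    have hE : Real.exp (-(γ l).re * (b+y₀)) ≤ Real.exp (-(c₁*(1+|l|))*d) := by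
      apply Real.exp_le_exp.mpr
      have h2 : c₁*(1+|l|)*d ≤ (γ l).re*(b+y₀) := mul_le_mul (hγc₁ l) hdb hd.le (hγre l).le
      nlinarith
    calc Real.exp (-(γ l).re * (b+y₀)) *
          Complex.abs ((γ l + Complex.I*α)/(γ l - Complex.I*α)) / Complex.abs (γ l)
        ≤ Real.exp (-(c₁*(1+|l|))*d) * (1 + 2*Complex.abs α/m) / m :=
          div_le_div₀ (mul_nonneg (Real.exp_pos _).le hCR0)
            (mul_le_mul hE (hCR l) (Complex.abs.nonneg _) (Real.exp_pos _).le) hm (habsγm l)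
    _ = ((1 + 2*Complex.abs α/m)/m) * Real.exp (-(c₁*(1+|l|))*d) := by ring
  have hCC0 : (0:ℝ) ≤ ((1 + 2*Complex.abs α/m)/m) * (1 + Complex.abs k)^2 :=
    mul_nonneg (div_nonneg hCR0 hm.le) (by positivity)
  have hBint : ∀ d : ℝ, 0 < d → Integrable (fun l : ℝ =>
      ((1 + 2*Complex.abs α/m)/m) * (1 + Complex.abs k)^2 * (1+|l|)^2 *
        Real.exp (-(c₁*(1+|l|))*d)) := by
    intro d hd
    exact B_integrable _ c₁ d hc₁ hd hCC0
  have hK1 : (1:ℝ) ≤ (1+Complex.abs k)^2 := by nlinarith [Complex.abs.nonneg k]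
  have hgb : ∀ (q : ℂ) (a b d : ℝ), 0 < d → d ≤ b + y₀ → ∀ l : ℝ,
      Complex.abs q ≤ (1+|l|)^2*(1+Complex.abs k)^2 →
      ‖q * fint γ α x₀ y₀ a b l‖ ≤
        ((1 + 2*Complex.abs α/m)/m) * (1 + Complex.abs k)^2 * (1+|l|)^2 *
          Real.exp (-(c₁*(1+|l|))*d) := by
    intro q a b d hd hdb l hq
    rw [norm_mul, Complex.norm_eq_abs]
    calc Complex.abs q * ‖fint γ α x₀ y₀ a b l‖
        ≤ ((1+|l|)^2*(1+Complex.abs k)^2) *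
            (((1 + 2*Complex.abs α/m)/m) * Real.exp (-(c₁*(1+|l|))*d)) :=
          mul_le_mul hq (hfb a b d hd hdb l) (norm_nonneg _) (by positivity)
    _ = _ := by ring
  have hsq1 : ∀ l : ℝ, (1:ℝ) ≤ (1+|l|)^2*(1+Complex.abs k)^2 := by
    intro l
    nlinarith [abs_nonneg l, Complex.abs.nonneg k, sq_nonneg (|l| + Complex.abs k)]
  have hb0 : ∀ (a b d : ℝ), 0 < d → d ≤ b + y₀ → ∀ l : ℝ,
      ‖fint γ α x₀ y₀ a b l‖ ≤
        ((1 + 2*Complex.abs α/m)/m) * (1 + Complex.abs k)^2 * (1+|l|)^2 *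
          Real.exp (-(c₁*(1+|l|))*d) := by
    intro a b d hd hdb l
    have h := hgb 1 a b d hd hdb l (by simpa using hsq1 l)
    simpa using h
  have habsIl : ∀ l : ℝ, Complex.abs (Complex.I * (l:ℂ)) = |l| := by
    intro l; rw [map_mul, Complex.abs_I, one_mul, Complex.abs_ofReal]
  have hql : ∀ l : ℝ, |l| ≤ (1+|l|)^2*(1+Complex.abs k)^2 := by
    intro l
    have h1 : (1+|l|)^2*1 ≤ (1+|l|)^2*(1+Complex.abs k)^2 :=
      mul_le_mul_of_nonneg_left hK1 (sq_nonneg _)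
    nlinarith [abs_nonneg l]
  have hql2 : ∀ l : ℝ, |l| * |l| ≤ (1+|l|)^2*(1+Complex.abs k)^2 := by
    intro l
    have h1 : (1+|l|)^2*1 ≤ (1+|l|)^2*(1+Complex.abs k)^2 :=
      mul_le_mul_of_nonneg_left hK1 (sq_nonneg _)
    nlinarith [abs_nonneg l]
  have hqg : ∀ l : ℝ, Complex.abs (γ l) ≤ (1+|l|)^2*(1+Complex.abs k)^2 := by
    intro l
    have h1 := hγabs l
    have ht : (1:ℝ) ≤ (1+|l|)*(1+Complex.abs k) := by
      nlinarith [abs_nonneg l, Complex.abs.nonneg k]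
    have h2 : (1+|l|)*(1+Complex.abs k) ≤ (1+|l|)^2*(1+Complex.abs k)^2 := by
      nlinarith [mul_nonneg (mul_nonneg (by positivity) (by linarith [Complex.abs.nonneg k]) : (0:ℝ) ≤ (1+|l|)*(1+Complex.abs k))
        (sub_nonneg.mpr ht)]
    linarith
  have hqg2 : ∀ l : ℝ, Complex.abs (γ l) * Complex.abs (γ l) ≤
      (1+|l|)^2*(1+Complex.abs k)^2 := by
    intro l
    have h1 := hγabs l
    nlinarith [Complex.abs.nonneg (γ l), abs_nonneg l, Complex.abs.nonneg k]
  have hIntf : ∀ a b : ℝ, 0 < b + y₀ → Integrable (fun l => fint γ α x₀ y₀ a b l) := by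
    intro a b hb
    apply Integrable.mono' (hBint (b+y₀) hb)
    · exact (fint_cont γ α x₀ y₀ hγcont hγne hγαne a b).aestronglyMeasurable
    · exact ae_of_all _ (hb0 a b (b+y₀) hb le_rfl)
  have hcont1 : ∀ a b : ℝ, Continuous (fun l : ℝ => Complex.I * (l:ℂ) * fint γ α x₀ y₀ a b l) :=
    fun a b => (continuous_const.mul Complex.continuous_ofReal).mul
      (fint_cont γ α x₀ y₀ hγcont hγne hγαne a b)
  have hcont2 : ∀ a b : ℝ, Continuous (fun l : ℝ => -γ l * fint γ α x₀ y₀ a b l) :=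
    fun a b => (hγcont.neg).mul (fint_cont γ α x₀ y₀ hγcont hγne hγαne a b)
  -- x-direction, first derivative, at every point t
  have HX : ∀ t : ℝ, Integrable (fun l : ℝ => Complex.I * (l:ℂ) * fint γ α x₀ y₀ t y l) ∧
      HasDerivAt (fun s : ℝ => ∫ l : ℝ, fint γ α x₀ y₀ s y l)
        (∫ l : ℝ, Complex.I * (l:ℂ) * fint γ α x₀ y₀ t y l) t := by
    intro t
    refine hasDerivAt_integral_of_dominated_loc_of_deriv_le
      (F := fun s l => fint γ α x₀ y₀ s y l)
      (F' := fun s l => Complex.I * (l:ℂ) * fint γ α x₀ y₀ s y l)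
      (bound := fun l => ((1 + 2*Complex.abs α/m)/m) * (1 + Complex.abs k)^2 * (1+|l|)^2 *
        Real.exp (-(c₁*(1+|l|))*(y+y₀)))
      (Metric.ball_mem_nhds _ one_pos) ?_ ?_ ?_ ?_ ?_ ?_
    · exact Filter.Eventually.of_forall fun s =>
        (fint_cont γ α x₀ y₀ hγcont hγne hγαne s y).aestronglyMeasurable
    · exact hIntf t y hy
    · exact (hcont1 t y).aestronglyMeasurable
    · apply ae_of_all
      intro l s hs
      apply hgb (Complex.I * (l:ℂ)) s y (y+y₀) hy le_rfl l
      rw [habsIl l]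
      exact hql l
    · exact hBint (y+y₀) hy
    · apply ae_of_all
      intro l s hs
      exact fint_hasDerivAt_x γ α x₀ y₀ y l s
  -- x-direction, second derivative, at x
  have HX2 : Integrable (fun l : ℝ =>
        Complex.I*(l:ℂ)*(Complex.I*(l:ℂ)*fint γ α x₀ y₀ x y l)) ∧
      HasDerivAt (fun t : ℝ => ∫ l : ℝ, Complex.I*(l:ℂ)*fint γ α x₀ y₀ t y l)
        (∫ l : ℝ, Complex.I*(l:ℂ)*(Complex.I*(l:ℂ)*fint γ α x₀ y₀ x y l)) x := by
    refine hasDerivAt_integral_of_dominated_loc_of_deriv_le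
      (F := fun s l => Complex.I*(l:ℂ)*fint γ α x₀ y₀ s y l)
      (F' := fun s l => Complex.I*(l:ℂ)*(Complex.I*(l:ℂ)*fint γ α x₀ y₀ s y l))
      (bound := fun l => ((1 + 2*Complex.abs α/m)/m) * (1 + Complex.abs k)^2 * (1+|l|)^2 *
        Real.exp (-(c₁*(1+|l|))*(y+y₀)))
      (Metric.ball_mem_nhds _ one_pos) ?_ ?_ ?_ ?_ ?_ ?_
    · exact Filter.Eventually.of_forall fun s => (hcont1 s y).aestronglyMeasurable
    · exact (HX x).1
    · exact ((continuous_const.mul Complex.continuous_ofReal).mul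
        (hcont1 x y)).aestronglyMeasurable
    · apply ae_of_all
      intro l s hs
      beta_reduce
      rw [← mul_assoc]
      apply hgb (Complex.I*(l:ℂ)*(Complex.I*(l:ℂ))) s y (y+y₀) hy le_rfl l
      rw [map_mul, habsIl l]
      exact hql2 l
    · exact hBint (y+y₀) hy
    · apply ae_of_all
      intro l s hs
      exact (fint_hasDerivAt_x γ α x₀ y₀ y l s).const_mul (Complex.I*(l:ℂ))
  -- y-direction, first derivative, at every t with 0 < t + y₀
  have HY : ∀ t : ℝ, 0 < t + y₀ →
      Integrable (fun l : ℝ => -γ l * fint γ α x₀ y₀ x t l) ∧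
      HasDerivAt (fun s : ℝ => ∫ l : ℝ, fint γ α x₀ y₀ x s l)
        (∫ l : ℝ, -γ l * fint γ α x₀ y₀ x t l) t := by
    intro t ht
    refine hasDerivAt_integral_of_dominated_loc_of_deriv_le
      (F := fun s l => fint γ α x₀ y₀ x s l)
      (F' := fun s l => -γ l * fint γ α x₀ y₀ x s l)
      (bound := fun l => ((1 + 2*Complex.abs α/m)/m) * (1 + Complex.abs k)^2 * (1+|l|)^2 *
        Real.exp (-(c₁*(1+|l|))*((t+y₀)/2)))
      (Metric.ball_mem_nhds _ (by linarith : (0:ℝ) < (t+y₀)/2)) ?_ ?_ ?_ ?_ ?_ ?_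
    · exact Filter.Eventually.of_forall fun s =>
        (fint_cont γ α x₀ y₀ hγcont hγne hγαne x s).aestronglyMeasurable
    · exact hIntf x t ht
    · exact (hcont2 x t).aestronglyMeasurable
    · apply ae_of_all
      intro l s hs
      have hs2 : (t+y₀)/2 ≤ s + y₀ := by
        rw [Metric.mem_ball, Real.dist_eq] at hs
        have := abs_lt.mp hs
        linarith [this.1]
      beta_reduce
      apply hgb (-γ l) x s ((t+y₀)/2) (by linarith) hs2 l
      rw [AbsoluteValue.map_neg]
      exact hqg l
    · exact hBint ((t+y₀)/2) (by linarith)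
    · apply ae_of_all
      intro l s hs
      exact fint_hasDerivAt_y γ α x₀ y₀ x l s
  -- y-direction, second derivative, at y
  have HY2 : Integrable (fun l : ℝ => -γ l*(-γ l*fint γ α x₀ y₀ x y l)) ∧
      HasDerivAt (fun t : ℝ => ∫ l : ℝ, -γ l*fint γ α x₀ y₀ x t l)
        (∫ l : ℝ, -γ l*(-γ l*fint γ α x₀ y₀ x y l)) y := by
    refine hasDerivAt_integral_of_dominated_loc_of_deriv_le
      (F := fun s l => -γ l*fint γ α x₀ y₀ x s l)
      (F' := fun s l => -γ l*(-γ l*fint γ α x₀ y₀ x s l))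
      (bound := fun l => ((1 + 2*Complex.abs α/m)/m) * (1 + Complex.abs k)^2 * (1+|l|)^2 *
        Real.exp (-(c₁*(1+|l|))*((y+y₀)/2)))
      (Metric.ball_mem_nhds _ (by linarith : (0:ℝ) < (y+y₀)/2)) ?_ ?_ ?_ ?_ ?_ ?_
    · exact Filter.Eventually.of_forall fun s => (hcont2 x s).aestronglyMeasurable
    · exact (HY y hy).1
    · exact ((hγcont.neg).mul (hcont2 x y)).aestronglyMeasurable
    · apply ae_of_all
      intro l s hs
      have hs2 : (y+y₀)/2 ≤ s + y₀ := by
        rw [Metric.mem_ball, Real.dist_eq] at hs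
        have := abs_lt.mp hs
        linarith [this.1]
      beta_reduce
      rw [← mul_assoc]
      apply hgb (-γ l * -γ l) x s ((y+y₀)/2) (by linarith) hs2 l
      rw [map_mul, AbsoluteValue.map_neg]
      exact hqg2 l
    · exact hBint ((y+y₀)/2) (by linarith)
    · apply ae_of_all
      intro l s hs
      exact (fint_hasDerivAt_y γ α x₀ y₀ x l s).const_mul (-γ l)
  -- assemble
  have hu' : ∀ a b : ℝ, u a b = (1/(4*(Real.pi:ℂ))) * ∫ l : ℝ, fint γ α x₀ y₀ a b l := by
    intro a b
    rw [hu a b]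
    rfl
  have hUx : ∀ t : ℝ, HasDerivAt (fun s : ℝ => u s y)
      ((1/(4*(Real.pi:ℂ))) * ∫ l : ℝ, Complex.I*(l:ℂ)*fint γ α x₀ y₀ t y l) t := by
    intro t
    have h := (HX t).2.const_mul (1/(4*(Real.pi:ℂ)))
    have heq : (fun s : ℝ => u s y) =
        fun s : ℝ => (1/(4*(Real.pi:ℂ))) * ∫ l : ℝ, fint γ α x₀ y₀ s y l :=
      funext fun s => hu' s y
    rw [heq]
    exact h
  have hderivx : (fun t : ℝ => deriv (fun s : ℝ => u s y) t) =
      fun t : ℝ => (1/(4*(Real.pi:ℂ))) * ∫ l : ℝ, Complex.I*(l:ℂ)*fint γ α x₀ y₀ t y l :=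
    funext fun t => (hUx t).deriv
  have hUxx : HasDerivAt (fun t : ℝ => deriv (fun s : ℝ => u s y) t)
      ((1/(4*(Real.pi:ℂ))) * ∫ l : ℝ, Complex.I*(l:ℂ)*(Complex.I*(l:ℂ)*fint γ α x₀ y₀ x y l))
      x := by
    rw [hderivx]
    exact HX2.2.const_mul _
  have hUy : ∀ t : ℝ, 0 < t+y₀ → HasDerivAt (fun s : ℝ => u x s)
      ((1/(4*(Real.pi:ℂ))) * ∫ l : ℝ, -γ l * fint γ α x₀ y₀ x t l) t := by
    intro t ht
    have h := (HY t ht).2.const_mul (1/(4*(Real.pi:ℂ)))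
    have heq : (fun s : ℝ => u x s) =
        fun s : ℝ => (1/(4*(Real.pi:ℂ))) * ∫ l : ℝ, fint γ α x₀ y₀ x s l :=
      funext fun s => hu' x s
    rw [heq]
    exact h
  have hUyy : HasDerivAt (fun t : ℝ => deriv (fun s : ℝ => u x s) t)
      ((1/(4*(Real.pi:ℂ))) * ∫ l : ℝ, -γ l*(-γ l*fint γ α x₀ y₀ x y l)) y := by
    have h := HY2.2.const_mul (1/(4*(Real.pi:ℂ)))
    apply h.congr_of_eventuallyEq
    have hmem : Set.Ioi (-y₀) ∈ nhds y := Ioi_mem_nhds (by linarith)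
    filter_upwards [hmem] with t ht
    have ht2 : 0 < t + y₀ := by
      have := Set.mem_Ioi.mp ht
      linarith
    exact (hUy t ht2).deriv
  refine ⟨_, _, _, _, hUx x, hUxx, hUy y hy, hUyy, ?_⟩
  have hptw : ∀ l : ℝ, Complex.I*(l:ℂ)*(Complex.I*(l:ℂ)*fint γ α x₀ y₀ x y l) +
      -γ l*(-γ l*fint γ α x₀ y₀ x y l) + k^2*fint γ α x₀ y₀ x y l = 0 := by
    intro l
    have h := hγsq l
    have hI := Complex.I_sq
    linear_combination fint γ α x₀ y₀ x y l * h + (l:ℂ)^2 * fint γ α x₀ y₀ x y l * hI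
  have hint3 : Integrable (fun l : ℝ => k^2 * fint γ α x₀ y₀ x y l) :=
    (hIntf x y hy).const_mul (k^2)
  have hsum : (∫ l : ℝ, Complex.I*(l:ℂ)*(Complex.I*(l:ℂ)*fint γ α x₀ y₀ x y l)) +
      (∫ l : ℝ, -γ l*(-γ l*fint γ α x₀ y₀ x y l)) +
      (∫ l : ℝ, k^2*fint γ α x₀ y₀ x y l) = 0 := by
    have h0 : (fun l : ℝ => Complex.I*(l:ℂ)*(Complex.I*(l:ℂ)*fint γ α x₀ y₀ x y l) +
        -γ l*(-γ l*fint γ α x₀ y₀ x y l) + k^2*fint γ α x₀ y₀ x y l) = fun _ => (0:ℂ) :=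
      funext hptw
    have hzero : ∫ l : ℝ, (Complex.I*(l:ℂ)*(Complex.I*(l:ℂ)*fint γ α x₀ y₀ x y l) +
        -γ l*(-γ l*fint γ α x₀ y₀ x y l) + k^2*fint γ α x₀ y₀ x y l) = 0 := by
      rw [h0, integral_zero]
    have hAB : Integrable (fun l : ℝ => Complex.I*(l:ℂ)*(Complex.I*(l:ℂ)*fint γ α x₀ y₀ x y l) +
        -γ l*(-γ l*fint γ α x₀ y₀ x y l)) := HX2.1.add HY2.1
    rw [← hzero, integral_add hAB hint3, integral_add HX2.1 HY2.1]
  rw [hu' x y]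
  rw [show k^2 * ((1/(4*(Real.pi:ℂ))) * ∫ l : ℝ, fint γ α x₀ y₀ x y l) =
      (1/(4*(Real.pi:ℂ))) * ∫ l : ℝ, k^2 * fint γ α x₀ y₀ x y l from by
    rw [integral_const_mul]; ring]
  calc (1/(4*(Real.pi:ℂ))) * (∫ l : ℝ, Complex.I*(l:ℂ)*(Complex.I*(l:ℂ)*fint γ α x₀ y₀ x y l)) +
        (1/(4*(Real.pi:ℂ))) * (∫ l : ℝ, -γ l*(-γ l*fint γ α x₀ y₀ x y l)) +
        (1/(4*(Real.pi:ℂ))) * (∫ l : ℝ, k^2*fint γ α x₀ y₀ x y l)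
      = (1/(4*(Real.pi:ℂ))) * ((∫ l : ℝ, Complex.I*(l:ℂ)*(Complex.I*(l:ℂ)*fint γ α x₀ y₀ x y l)) +
        (∫ l : ℝ, -γ l*(-γ l*fint γ α x₀ y₀ x y l)) +
        (∫ l : ℝ, k^2*fint γ α x₀ y₀ x y l)) := by ring
  _ = 0 := by rw [hsum]; ring
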